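/- arXiv:1806.09842 — 3 statements merged into one kernel-verified Lean document; each statement's English description precedes it below -/
import Mathlib

section
/- Let g be a convex differentiable function on a product of convex sets C = ⊗_{r∈[R]} C_r, and suppose the weak strong convexity estimate g(y*) ≥ g(y) + ⟨∇g(y), y* − y⟩ + (1/μ)d²(y, Ξ) holds along with g(y) − g* ≥ (1/μ)d²(y, Ξ), where Ξ is the solution set and d the distance to Ξ. Then ⟨∇g(y), y* − y⟩ ≤ (2/(μ+1))[g* − g(y) − d²(y,Ξ)], where y* is the projection of y onto Ξ. -/
open scoped RealInnerProductSpace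

/-! With `Δ = g y* - g y` and `d = ‖y - y*‖²`, the first estimate bounds the inner product by
`Δ - d/μ`. This is at most `(2/(μ+1)) (Δ - d)`, since the difference of the two bounds is
`-(μ - 1)(Δ + d/μ)/(μ + 1)` and the second estimate says exactly that `Δ + d/μ ≤ 0`. -/

theorem sub_one_div_mul_le_two_div_add_one_mul_sub {Δ d μ : ℝ} (hμ : 1 ≤ μ)
    (h : Δ + 1 / μ * d ≤ 0) : Δ - 1 / μ * d ≤ 2 / (μ + 1) * (Δ - d) := by
  have hμ0 : μ ≠ 0 := by positivity
  have hμ1 : 0 < μ + 1 := by linarith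
  have gap : 2 / (μ + 1) * (Δ - d) - (Δ - 1 / μ * d) =
      -((μ - 1) * (Δ + 1 / μ * d)) / (μ + 1) := by
    field_simp
    ring
  have gap_nonneg : 0 ≤ -((μ - 1) * (Δ + 1 / μ * d)) / (μ + 1) :=
    div_nonneg (neg_nonneg.2 (mul_nonpos_of_nonneg_of_nonpos (by linarith) h)) hμ1.le
  linarith

/-- Weak strong convexity estimate: if
`g(y*) ≥ g(y) + ⟨∇g(y), y* − y⟩ + (1/μ) d²(y, Ξ)` and `g(y) − g* ≥ (1/μ) d²(y, Ξ)`,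
where `y*` is the projection of `y` onto the solution set (so `d(y,Ξ) = ‖y − y*‖` and
`g* = g y*`), then `⟨∇g(y), y* − y⟩ ≤ (2/(μ+1)) [g* − g(y) − d²(y, Ξ)]`. -/
theorem stmt15 {H : Type*} [NormedAddCommGroup H] [InnerProductSpace ℝ H]
    (g : H → ℝ) (G : H → H) (μ : ℝ) (hμ : 1 ≤ μ) (y ystar : H)
    (h1 : g y + ⟪G y, ystar - y⟫ + (1 / μ) * ‖y - ystar‖ ^ 2 ≤ g ystar)
    (h2 : (1 / μ) * ‖y - ystar‖ ^ 2 ≤ g y - g ystar) :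
    ⟪G y, ystar - y⟫ ≤ (2 / (μ + 1)) * (g ystar - g y - ‖y - ystar‖ ^ 2) :=
  calc ⟪G y, ystar - y⟫ ≤ (g ystar - g y) - 1 / μ * ‖y - ystar‖ ^ 2 := by linarith
    _ ≤ 2 / (μ + 1) * (g ystar - g y - ‖y - ystar‖ ^ 2) :=
      sub_one_div_mul_le_two_div_add_one_mul_sub hμ (by linarith)
end

section
/- For the PageRank problem on a graph, the vector p satisfying p = (1−α)s + α A D⁻¹ p is (under the change of variables x = D⁻¹p, a = D⁻¹s, W = ((1−α)/α)D) the unique minimizer of ‖x − a‖²_W + Σ_{ij∈E}(x_i − x_j)², assuming α ∈ (0,1) and D is the positive diagonal degree matrix. -/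
/-!
The energy `E(z) = ‖z − a‖²_W + ½ Σᵢⱼ Aᵢⱼ (zᵢ − zⱼ)²` is quadratic, and since `A` is symmetric its
expansion around `x` is `E(x + h) = E(x) + 2⟨h, W(x − a) + Lx⟩ + E₀(h)`, where `L = D − A` and
`E₀(h) = ‖h‖²_W + ½ Σᵢⱼ Aᵢⱼ (hᵢ − hⱼ)²` vanishes only at `h = 0` when `W > 0` and `A ≥ 0`.
For `x = D⁻¹p`, `a = D⁻¹s`, `W = ((1−α)/α) D`, the gradient term `α (W(x − a) + Lx)` equals
`p − (1−α)s − α A D⁻¹ p`, which is zero by the PageRank equation; hence `E(z) = E(x) + E₀(z − x)`.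
-/

open Finset

variable {ι : Type*} [Fintype ι]

def weightedSqDist (w a z : ι → ℝ) : ℝ := ∑ i, w i * (z i - a i) ^ 2

def dirichletEnergy (A : ι → ι → ℝ) (z : ι → ℝ) : ℝ := ∑ i, ∑ j, A i j * (z i - z j) ^ 2

noncomputable def regularizedDirichletEnergy (w a : ι → ℝ) (A : ι → ι → ℝ) (z : ι → ℝ) : ℝ :=
  weightedSqDist w a z + (1 / 2) * dirichletEnergy A z

theorem weightedSqDist_add (w a x h : ι → ℝ) :
    weightedSqDist w a (x + h) =
      weightedSqDist w a x + weightedSqDist w 0 h + 2 * ∑ i, h i * (w i * (x i - a i)) := by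
  simp only [weightedSqDist, mul_sum, ← sum_add_distrib]
  exact sum_congr rfl fun i _ => by simp only [Pi.add_apply, Pi.zero_apply]; ring

theorem weightedSqDist_nonneg {w : ι → ℝ} (hw : ∀ i, 0 ≤ w i) (a z : ι → ℝ) :
    0 ≤ weightedSqDist w a z :=
  sum_nonneg fun i _ => mul_nonneg (hw i) (sq_nonneg _)

theorem eq_of_weightedSqDist_eq_zero {w a z : ι → ℝ} (hw : ∀ i, 0 < w i)
    (h : weightedSqDist w a z = 0) : z = a := by
  funext i
  have hi := (sum_eq_zero_iff_of_nonneg fun j _ => mul_nonneg (hw j).le (sq_nonneg _)).mp h i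
    (mem_univ i)
  simpa [(hw i).ne', sub_eq_zero] using hi

theorem sum_sum_mul_sub_mul_sub_of_symm {A : ι → ι → ℝ} (hA : ∀ i j, A i j = A j i)
    (x h : ι → ℝ) :
    ∑ i, ∑ j, A i j * (x i - x j) * (h i - h j) = 2 * ∑ i, h i * ∑ j, A i j * (x i - x j) := by
  have hswap : ∑ i, ∑ j, A i j * (x i - x j) * h j = -∑ i, ∑ j, A i j * (x i - x j) * h i := by
    rw [sum_comm, ← sum_neg_distrib]
    exact sum_congr rfl fun i _ => by
      rw [← sum_neg_distrib]; exact sum_congr rfl fun j _ => by rw [hA j i]; ring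
  have hsplit : ∑ i, ∑ j, A i j * (x i - x j) * (h i - h j) =
      ∑ i, ∑ j, A i j * (x i - x j) * h i - ∑ i, ∑ j, A i j * (x i - x j) * h j := by
    simp only [← sum_sub_distrib, mul_sub]
  rw [hsplit, hswap, sub_neg_eq_add, ← two_mul]
  refine congrArg _ (sum_congr rfl fun i _ => ?_)
  rw [mul_sum]
  exact sum_congr rfl fun j _ => by ring

theorem dirichletEnergy_add {A : ι → ι → ℝ} (hA : ∀ i j, A i j = A j i) (x h : ι → ℝ) :
    dirichletEnergy A (x + h) =
      dirichletEnergy A x + dirichletEnergy A h + 4 * ∑ i, h i * ∑ j, A i j * (x i - x j) := by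
  have hcross := sum_sum_mul_sub_mul_sub_of_symm hA x h
  have hexpand : dirichletEnergy A (x + h) = dirichletEnergy A x + dirichletEnergy A h +
      2 * ∑ i, ∑ j, A i j * (x i - x j) * (h i - h j) := by
    simp only [dirichletEnergy, mul_sum, ← sum_add_distrib]
    exact sum_congr rfl fun i _ => sum_congr rfl fun j _ => by simp only [Pi.add_apply]; ring
  rw [hexpand, hcross]
  ring

theorem dirichletEnergy_nonneg {A : ι → ι → ℝ} (hA : ∀ i j, 0 ≤ A i j) (z : ι → ℝ) :
    0 ≤ dirichletEnergy A z :=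
  sum_nonneg fun i _ => sum_nonneg fun j _ => mul_nonneg (hA i j) (sq_nonneg _)

theorem regularizedDirichletEnergy_add_of_grad_eq_zero {w a x : ι → ℝ} {A : ι → ι → ℝ}
    (hA : ∀ i j, A i j = A j i)
    (hgrad : ∀ i, w i * (x i - a i) + ∑ j, A i j * (x i - x j) = 0) (h : ι → ℝ) :
    regularizedDirichletEnergy w a A (x + h) =
      regularizedDirichletEnergy w a A x + regularizedDirichletEnergy w 0 A h := by
  have hcross : ∑ i, h i * (w i * (x i - a i)) + ∑ i, h i * ∑ j, A i j * (x i - x j) = 0 := by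
    rw [← sum_add_distrib]
    exact sum_eq_zero fun i _ => by rw [← mul_add, hgrad i, mul_zero]
  simp only [regularizedDirichletEnergy, weightedSqDist_add, dirichletEnergy_add hA]
  linear_combination 2 * hcross

theorem regularizedDirichletEnergy_unique_min_of_grad_eq_zero {w a x : ι → ℝ}
    {A : ι → ι → ℝ} (hw : ∀ i, 0 < w i) (hA : ∀ i j, A i j = A j i) (hAnn : ∀ i j, 0 ≤ A i j)
    (hgrad : ∀ i, w i * (x i - a i) + ∑ j, A i j * (x i - x j) = 0) (z : ι → ℝ) :
    regularizedDirichletEnergy w a A x ≤ regularizedDirichletEnergy w a A z ∧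
      (regularizedDirichletEnergy w a A z = regularizedDirichletEnergy w a A x → z = x) := by
  have hz := regularizedDirichletEnergy_add_of_grad_eq_zero hA hgrad (z - x)
  rw [add_sub_cancel] at hz
  have hsq := weightedSqDist_nonneg (fun i => (hw i).le) 0 (z - x)
  have hdir := dirichletEnergy_nonneg hAnn (z - x)
  unfold regularizedDirichletEnergy at hz ⊢
  refine ⟨by linarith, fun heq => ?_⟩
  have hzero : weightedSqDist w 0 (z - x) = 0 := by linarith
  exact sub_eq_zero.mp (eq_of_weightedSqDist_eq_zero hw hzero)

theorem pagerank_grad_eq_zero {A : ι → ι → ℝ} {D : ι → ℝ} (hD : ∀ i, D i = ∑ j, A i j)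
    (hDpos : ∀ i, 0 < D i) {α : ℝ} (hα : α ≠ 0) {s p : ι → ℝ}
    (hfix : ∀ i, p i = (1 - α) * s i + α * ∑ j, A i j * (p j / D j)) (i : ι) :
    (1 - α) / α * D i * (p i / D i - s i / D i) + ∑ j, A i j * (p i / D i - p j / D j) = 0 := by
  set S := ∑ j, A i j * (p j / D j)
  have hlap : ∑ j, A i j * (p i / D i - p j / D j) = p i - S := by
    simp only [S, mul_sub, sum_sub_distrib, ← sum_mul, ← hD i]
    field_simp [(hDpos i).ne']
  have hdist : D i * (p i / D i - s i / D i) = p i - s i := by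
    field_simp [(hDpos i).ne']
  rw [hlap, mul_assoc, hdist]
  field_simp
  linear_combination hfix i

/-- PageRank as a QDSFM problem: if `p` satisfies the fixed-point equation
`p = (1−α) s + α A D⁻¹ p`, then under the change of variables `x = D⁻¹ p`, `a = D⁻¹ s`,
`W = ((1−α)/α) D`, the point `x` is the unique minimizer of
`‖x − a‖²_W + Σ_{ij ∈ E} (x_i − x_j)²`. -/
theorem stmt17 {N : ℕ} (A : Fin N → Fin N → ℝ) (hsymm : ∀ i j, A i j = A j i)
    (hnn : ∀ i j, 0 ≤ A i j) (D : Fin N → ℝ) (hD : ∀ i, D i = ∑ j, A i j)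
    (hDpos : ∀ i, 0 < D i) (α : ℝ) (hα : α ∈ Set.Ioo (0 : ℝ) 1) (s p : Fin N → ℝ)
    (hfix : ∀ i, p i = (1 - α) * s i + α * ∑ j, A i j * (p j / D j))
    (Φ : (Fin N → ℝ) → ℝ)
    (hΦ : Φ = fun x => ∑ i, ((1 - α) / α) * D i * (x i - s i / D i) ^ 2 +
      (1 / 2) * ∑ i, ∑ j, A i j * (x i - x j) ^ 2) :
    ∀ z : Fin N → ℝ, Φ (fun i => p i / D i) ≤ Φ z ∧
      (Φ z = Φ (fun i => p i / D i) → z = fun i => p i / D i) := by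
  obtain ⟨hα0, hα1⟩ := hα
  have hw : ∀ i, 0 < (1 - α) / α * D i := fun i =>
    mul_pos (div_pos (sub_pos.mpr hα1) hα0) (hDpos i)
  subst hΦ
  exact regularizedDirichletEnergy_unique_min_of_grad_eq_zero (a := fun i => s i / D i) hw hsymm
    hnn (pagerank_grad_eq_zero hD hDpos hα0.ne' hfix)
end

section
/- For a directed hyperedge with head set H and tail set T on ground set [N], the function f(z) = max_{i∈H} z_i − min_{j∈T} z_j (when this is ≥ 0, extended appropriately) is the Lovász extension of the submodular function F with F(S) = 1 if S∩H ≠ ∅ and ([N]∖S)∩T ≠ ∅, and F(S) = 0 otherwise; in particular F is submodular. -/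
/-!
Write `S_k = {σ 0, …, σ k}` for the level sets of the sorting, let `a` be the first position of a
head vertex and `b` the last position of a tail vertex. Then `S_k` meets `H` and misses a vertex
of `T` exactly when `a ≤ k < b`, so the Lovász sum telescopes to `z (σ a) - z (σ b)` when `a ≤ b`
and is `0` otherwise. Since the coordinates are sorted, `z (σ a) = max_H z`, `z (σ b) = min_T z`,
and the sign of their difference is decided by `a ≤ b`.

Submodularity: `F` is the indicator of "`S` contains a head and misses a tail"; if the union or
the intersection is cut then so is `S₁` or `S₂`, and if both are cut then both `S₁` and `S₂` are.
-/

open Finset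

lemma boole_add_boole_le {p q r s : Prop} [Decidable p] [Decidable q] [Decidable r] [Decidable s]
    (hp : p → r ∨ s) (hq : q → r ∨ s) (hpq : p → q → r ∧ s) :
    ((if p then 1 else 0) : ℝ) + (if q then 1 else 0) ≤
      (if r then 1 else 0) + (if s then 1 else 0) := by
  split_ifs <;> norm_num <;> tauto

lemma Finset.sup'_comp_eq_of_antitoneOn {ι β γ : Type*} [LinearOrder β] [LinearOrder γ]
    {s : Finset ι} (hs : s.Nonempty) {f : ι → β} {g : β → γ} (hg : AntitoneOn g (f '' s)) :
    s.sup' hs (g ∘ f) = g (s.inf' hs f) := by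
  obtain ⟨i, hi, hfi⟩ := exists_mem_eq_inf' hs f
  rw [hfi]
  refine le_antisymm (sup'_le _ _ fun j hj => ?_) (le_sup' (g ∘ f) hi)
  exact hg (Set.mem_image_of_mem f hi) (Set.mem_image_of_mem f hj) (hfi ▸ inf'_le f hj)

lemma Finset.inf'_comp_eq_of_antitoneOn {ι β γ : Type*} [LinearOrder β] [LinearOrder γ]
    {s : Finset ι} (hs : s.Nonempty) {f : ι → β} {g : β → γ} (hg : AntitoneOn g (f '' s)) :
    s.inf' hs (g ∘ f) = g (s.sup' hs f) :=
  sup'_comp_eq_of_antitoneOn (β := βᵒᵈ) (γ := γᵒᵈ) hs hg.dual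

lemma Fin.sum_ite_Ico_sub_succ {M : Type*} [AddCommGroup M] (g : ℕ → M) {N a b : ℕ}
    (hb : b ≤ N) :
    ∑ k : Fin N, (if a ≤ (k : ℕ) ∧ (k : ℕ) < b then g k - g (k + 1) else 0) =
      if a ≤ b then g a - g b else 0 := by
  rw [Fin.sum_univ_eq_sum_range (fun k => if a ≤ k ∧ k < b then g k - g (k + 1) else 0),
    ← sum_filter]
  have hIco : (range N).filter (fun k => a ≤ k ∧ k < b) = Ico a b := by
    ext k
    simp only [mem_filter, mem_range, mem_Ico]
    omega
  rw [hIco]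
  split_ifs with hab
  · rw [← neg_sub, ← sum_Ico_sub g hab, ← sum_neg_distrib]
    simp only [neg_sub]
  · rw [Ico_eq_empty (by omega), sum_empty]

section HyperedgeCut

variable {α : Type*} [Fintype α] [DecidableEq α]

def hyperedgeCut (H T : Finset α) (S : Finset α) : ℝ :=
  if (S ∩ H).Nonempty ∧ ((univ \ S) ∩ T).Nonempty then 1 else 0

variable (H T : Finset α)

lemma hyperedgeCut_eq_ite (S : Finset α) :
    hyperedgeCut H T S = if (∃ h ∈ H, h ∈ S) ∧ ∃ t ∈ T, t ∉ S then 1 else 0 := by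
  simp only [hyperedgeCut, Finset.Nonempty, mem_inter, mem_sdiff, mem_univ, true_and, and_comm]

theorem hyperedgeCut_union_add_inter_le (S₁ S₂ : Finset α) :
    hyperedgeCut H T (S₁ ∪ S₂) + hyperedgeCut H T (S₁ ∩ S₂) ≤
      hyperedgeCut H T S₁ + hyperedgeCut H T S₂ := by
  simp only [hyperedgeCut_eq_ite, mem_union, mem_inter]
  apply boole_add_boole_le
  · rintro ⟨⟨h, hH, hS₁ | hS₂⟩, t, hT, ht⟩
    · exact .inl ⟨⟨h, hH, hS₁⟩, t, hT, fun h => ht (.inl h)⟩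
    · exact .inr ⟨⟨h, hH, hS₂⟩, t, hT, fun h => ht (.inr h)⟩
  · rintro ⟨⟨h, hH, hS₁, hS₂⟩, t, hT, ht⟩
    by_cases ht₁ : t ∈ S₁
    · exact .inr ⟨⟨h, hH, hS₂⟩, t, hT, fun ht₂ => ht ⟨ht₁, ht₂⟩⟩
    · exact .inl ⟨⟨h, hH, hS₁⟩, t, hT, ht₁⟩
  · rintro ⟨-, t, hT, ht⟩ ⟨⟨h, hH, hS₁, hS₂⟩, -⟩
    exact ⟨⟨⟨h, hH, hS₁⟩, t, hT, fun h => ht (.inl h)⟩, ⟨h, hH, hS₂⟩, t, hT, fun h => ht (.inr h)⟩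

lemma hyperedgeCut_filter_le {β : Type*} [LinearOrder β] (hH : H.Nonempty) (hT : T.Nonempty)
    (f : α → β) (c : β) :
    hyperedgeCut H T (univ.filter fun j => f j ≤ c) =
      if H.inf' hH f ≤ c ∧ c < T.sup' hT f then 1 else 0 := by
  simp only [hyperedgeCut_eq_ite, mem_filter, mem_univ, true_and, not_le, inf'_le_iff,
    lt_sup'_iff]

end HyperedgeCut

/-- `σ k` is the coordinate of rank `k` in the decreasing order of `z`; the nonexistent
coordinate after the last one is read as `0`, which produces the term `F [N] · z (σ (N - 1))`. -/
def lovaszSum {N : ℕ} (F : Finset (Fin N) → ℝ) (z : Fin N → ℝ) (σ : Equiv.Perm (Fin N)) : ℝ :=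
  ∑ k : Fin N, F (univ.filter (fun j => (σ.symm j : ℕ) ≤ (k : ℕ))) *
    (z (σ k) - if h : (k : ℕ) + 1 < N then z (σ ⟨(k : ℕ) + 1, h⟩) else 0)

theorem lovaszSum_hyperedgeCut {N : ℕ} {H T : Finset (Fin N)} (hH : H.Nonempty)
    (hT : T.Nonempty) (z : Fin N → ℝ) (σ : Equiv.Perm (Fin N)) (hz : Antitone (z ∘ σ)) :
    lovaszSum (hyperedgeCut H T) z σ = max (H.sup' hH z - T.inf' hT z) 0 := by
  set pos : Fin N → ℕ := fun j => σ.symm j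
  set a := H.inf' hH pos
  set b := T.sup' hT pos
  let g : ℕ → ℝ := fun k => if h : k < N then z (σ ⟨k, h⟩) else 0
  have hgz : g ∘ pos = z := funext fun j => by simp [g, pos]
  have hg : AntitoneOn g (Set.Iio N) := fun i (hi : i < N) j (hj : j < N) hij => by
    simp only [g, dif_pos hi, dif_pos hj]
    exact hz (Fin.mk_le_mk.2 hij)
  have hpos : ∀ s : Finset (Fin N), pos '' s ⊆ Set.Iio N := by
    rintro s - ⟨j, -, rfl⟩
    exact (σ.symm j).isLt
  have hsup : H.sup' hH z = g a := by
    rw [← hgz, sup'_comp_eq_of_antitoneOn hH (hg.mono (hpos H))]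
  have hinf : T.inf' hT z = g b := by
    rw [← hgz, inf'_comp_eq_of_antitoneOn hT (hg.mono (hpos T))]
  have ha : a < N := (inf'_lt_iff hH).2 ⟨_, hH.choose_spec, (σ.symm _).isLt⟩
  have hb : b < N := (sup'_lt_iff hT).2 fun j _ => (σ.symm j).isLt
  have hterm : ∀ k : Fin N, hyperedgeCut H T (univ.filter fun j => pos j ≤ k) *
      (z (σ k) - g (k + 1)) = if a ≤ k ∧ (k : ℕ) < b then g k - g (k + 1) else 0 := by
    intro k
    rw [hyperedgeCut_filter_le H T hH hT, boole_mul]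
    simp only [g, k.isLt, dif_pos, Fin.eta]
    rfl
  rw [lovaszSum, sum_congr rfl fun k _ => hterm k, Fin.sum_ite_Ico_sub_succ g hb.le, hsup, hinf]
  split_ifs with hab
  · exact (max_eq_left (sub_nonneg.2 (hg ha hb hab))).symm
  · exact (max_eq_right (sub_nonpos.2 (hg hb ha (not_le.1 hab).le))).symm

theorem stmt19_general {N : ℕ} (H T : Finset (Fin N)) (hH : H.Nonempty)
    (hT : T.Nonempty) (F : Finset (Fin N) → ℝ)
    (hF : ∀ S : Finset (Fin N),
      F S = if (S ∩ H).Nonempty ∧ ((Finset.univ \ S) ∩ T).Nonempty then 1 else 0) :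
    (∀ S₁ S₂ : Finset (Fin N), F (S₁ ∪ S₂) + F (S₁ ∩ S₂) ≤ F S₁ + F S₂) ∧
      ∀ (z : Fin N → ℝ) (σ : Equiv.Perm (Fin N)),
        (∀ k l : Fin N, k ≤ l → z (σ l) ≤ z (σ k)) →
        (∑ k : Fin N,
            F (Finset.univ.filter (fun j => (σ.symm j : ℕ) ≤ (k : ℕ))) *
              (z (σ k) - if h : (k : ℕ) + 1 < N then z (σ ⟨(k : ℕ) + 1, h⟩) else 0)) =
          max (H.sup' hH z - T.inf' hT z) 0 := by
  obtain rfl : F = hyperedgeCut H T := funext hF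
  exact ⟨hyperedgeCut_union_add_inter_le H T, fun z σ hz => lovaszSum_hyperedgeCut hH hT z σ hz⟩

/-- For a directed hyperedge with nonempty head set `H` and tail set `T`, the function
`F(S) = 1` if `S ∩ H ≠ ∅` and `([N] \ S) ∩ T ≠ ∅` (else `0`) is submodular, and its
Lovász extension (defined via the sorting formula) equals
`z ↦ max (max_{i∈H} z_i − min_{j∈T} z_j) 0`. -/
theorem stmt19 {N : ℕ} (hN : 0 < N) (H T : Finset (Fin N)) (hH : H.Nonempty)
    (hT : T.Nonempty) (F : Finset (Fin N) → ℝ)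
    (hF : ∀ S : Finset (Fin N),
      F S = if (S ∩ H).Nonempty ∧ ((Finset.univ \ S) ∩ T).Nonempty then 1 else 0) :
    (∀ S₁ S₂ : Finset (Fin N), F (S₁ ∪ S₂) + F (S₁ ∩ S₂) ≤ F S₁ + F S₂) ∧
      ∀ (z : Fin N → ℝ) (σ : Equiv.Perm (Fin N)),
        (∀ k l : Fin N, k ≤ l → z (σ l) ≤ z (σ k)) →
        (∑ k : Fin N,
            F (Finset.univ.filter (fun j => (σ.symm j : ℕ) ≤ (k : ℕ))) *
              (z (σ k) - if h : (k : ℕ) + 1 < N then z (σ ⟨(k : ℕ) + 1, h⟩) else 0)) =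
          max (H.sup' hH z - T.inf' hT z) 0 :=
  stmt19_general H T hH hT F hF
end
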